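/- arXiv:1608.01803 — 2 statements merged into one kernel-verified Lean document; each statement's English description precedes it below -/
import Mathlib

section
/- Let μ₀ = μ₁ + μ₂ with μ₀ ≥ μ₁ having compact infinite supports, and β_n := γ_n(μ₁)/γ_n(μ₀) − 1. Then ‖p_n(μ₀,·) − p_n(μ₁,·)‖²_{L²(μ₁)} = 2β_n/(1+β_n) − ‖p_n(μ₀,·)‖²_{L²(μ₂)}, and consequently ‖p_n(μ₀,·) − p_n(μ₁,·)‖²_{L²(μ₁)} ≤ 2β_n. -/
open MeasureTheory Polynomial Filter

noncomputable section

/-- The (closed) support of a Borel measure on `ℂ`. -/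
def msupp (μ : Measure ℂ) : Set ℂ := {z | ∀ U ∈ nhds z, μ U ≠ 0}

/-- `p` is the sequence of orthonormal polynomials for `μ`:
`p n` has degree `n`, positive (real) leading coefficient, and
`⟪p m, p n⟫_μ = δ_{m n}`. -/
def ONP (μ : Measure ℂ) (p : ℕ → Polynomial ℂ) : Prop :=
  (∀ n, (p n).natDegree = n) ∧
  (∀ n, 0 < ((p n).leadingCoeff).re ∧ ((p n).leadingCoeff).im = 0) ∧
  (∀ m n, ∫ z, (p m).eval z * (starRingEnd ℂ) ((p n).eval z) ∂μ
      = if m = n then 1 else 0)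

/-- The `n`-th Christoffel function of the measure `μ` at the point `z`. -/
def christoffel (μ : Measure ℂ) (n : ℕ) (z : ℂ) : ℝ :=
  sInf {r : ℝ | ∃ P : Polynomial ℂ, P.natDegree ≤ n ∧ P.eval z = 1 ∧
      r = ∫ t, ‖P.eval t‖ ^ 2 ∂μ}

/-!
Since `p_n(μ₁)` is `L²(μ₁)`-orthogonal to all polynomials of degree `< n`, only the leading term
of `p_n(μ₀)` contributes to `⟪p_n(μ₀), p_n(μ₁)⟫_{μ₁}`, which is therefore
`γ_n(μ₀)/γ_n(μ₁) = 1/(1+β_n)`. Expanding the square,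
`‖p_n(μ₀) − p_n(μ₁)‖²_{μ₁} = ‖p_n(μ₀)‖²_{μ₁} + 1 − 2/(1+β_n)`, and `μ₀ = μ₁ + μ₂` gives
`‖p_n(μ₀)‖²_{μ₁} = 1 − ‖p_n(μ₀)‖²_{μ₂}`. The bound is `2β/(1+β) ≤ 2β` for `β > −1`.
-/

open ComplexConjugate

lemma Polynomial.degree_sub_C_mul_lt {K : Type*} [Field K] {q P : K[X]} {d : ℕ}
    (hq : q.degree ≤ d) (hP : P.natDegree = d) (hP0 : P ≠ 0) :
    (q - C (q.coeff d / P.leadingCoeff) * P).degree < d := by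
  subst hP
  rw [degree_lt_iff_coeff_zero]
  intro m hm
  rw [coeff_sub, coeff_C_mul]
  rcases hm.eq_or_lt with rfl | hlt
  · rw [← leadingCoeff, div_mul_cancel₀ _ (leadingCoeff_ne_zero.mpr hP0), sub_self]
  · rw [coeff_eq_zero_of_degree_lt (hq.trans_lt (by exact_mod_cast hlt)),
      coeff_eq_zero_of_natDegree_lt hlt, mul_zero, sub_zero]

lemma measure_compl_msupp (μ : Measure ℂ) : μ (msupp μ)ᶜ = 0 := by
  refine measure_null_of_locally_null _ fun x hx => ?_
  simp only [msupp, Set.mem_compl_iff, Set.mem_ofPred_eq, not_forall] at hx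
  obtain ⟨U, hU, hU0⟩ := hx
  exact ⟨U, nhdsWithin_le_nhds hU, by simpa using hU0⟩

lemma Continuous.integrable_of_isCompact_msupp {E : Type*} [NormedAddCommGroup E]
    {μ : Measure ℂ} [IsFiniteMeasure μ] (hμ : IsCompact (msupp μ)) {f : ℂ → E}
    (hf : Continuous f) : Integrable f μ := by
  obtain ⟨C, hC⟩ := hμ.exists_bound_of_continuousOn hf.continuousOn
  refine ⟨hf.aestronglyMeasurable, HasFiniteIntegral.of_bounded (C := C) ?_⟩
  filter_upwards [measure_eq_zero_iff_ae_notMem.mp (measure_compl_msupp μ)] with z hz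
  exact hC z (by simpa using hz)

def polyInner (μ : Measure ℂ) (P Q : ℂ[X]) : ℂ :=
  ∫ z, P.eval z * conj (Q.eval z) ∂μ

lemma polyInner_C_mul_left (μ : Measure ℂ) (a : ℂ) (P Q : ℂ[X]) :
    polyInner μ (C a * P) Q = a * polyInner μ P Q := by
  simp only [polyInner, eval_mul, eval_C, mul_assoc, integral_const_mul]

namespace ONP

variable {μ : Measure ℂ} {p : ℕ → ℂ[X]} (hp : ONP μ p)
include hp

lemma ne_zero (n : ℕ) : p n ≠ 0 := fun h => by
  simpa [h] using (hp.2.1 n).1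

lemma leadingCoeff_eq_ofReal (n : ℕ) : (p n).leadingCoeff = ((p n).leadingCoeff.re : ℂ) :=
  Complex.ext rfl (hp.2.1 n).2

lemma polyInner_eq_ite (m n : ℕ) : polyInner μ (p m) (p n) = if m = n then 1 else 0 :=
  hp.2.2 m n

lemma polyInner_self (n : ℕ) : polyInner μ (p n) (p n) = 1 := by
  simp [hp.polyInner_eq_ite]

end ONP

section CompactSupport

variable {μ : Measure ℂ} [IsFiniteMeasure μ] (hμ : IsCompact (msupp μ))
include hμ

lemma integrable_eval_mul_conj_eval (P Q : ℂ[X]) :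
    Integrable (fun z => P.eval z * conj (Q.eval z)) μ :=
  (P.continuous.mul (Complex.continuous_conj.comp Q.continuous)).integrable_of_isCompact_msupp hμ

lemma polyInner_add_left (P P' Q : ℂ[X]) :
    polyInner μ (P + P') Q = polyInner μ P Q + polyInner μ P' Q := by
  simp only [polyInner, eval_add, add_mul]
  exact integral_add (integrable_eval_mul_conj_eval hμ P Q)
    (integrable_eval_mul_conj_eval hμ P' Q)

lemma integral_re_eval_mul_conj_eval (P Q : ℂ[X]) :
    ∫ z, (P.eval z * conj (Q.eval z)).re ∂μ = (polyInner μ P Q).re :=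
  integral_re (integrable_eval_mul_conj_eval hμ P Q)

lemma integral_norm_sq_eq_re_polyInner (P : ℂ[X]) :
    ∫ z, ‖P.eval z‖ ^ 2 ∂μ = (polyInner μ P P).re := by
  simp [← integral_re_eval_mul_conj_eval hμ, Complex.mul_conj, Complex.sq_norm]

lemma integral_norm_eval_sub_sq (P Q : ℂ[X]) :
    ∫ z, ‖P.eval z - Q.eval z‖ ^ 2 ∂μ
      = ∫ z, ‖P.eval z‖ ^ 2 ∂μ + ∫ z, ‖Q.eval z‖ ^ 2 ∂μ
        - 2 * (polyInner μ P Q).re := by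
  have hint : ∀ R : ℂ[X], Integrable (fun z => Complex.normSq (R.eval z)) μ := fun R =>
    (Complex.continuous_normSq.comp R.continuous).integrable_of_isCompact_msupp hμ
  have hsum : Integrable (fun z => Complex.normSq (P.eval z) + Complex.normSq (Q.eval z)) μ :=
    (hint P).add (hint Q)
  have hre : Integrable (fun z => 2 * (P.eval z * conj (Q.eval z)).re) μ :=
    (integrable_eval_mul_conj_eval hμ P Q).re.const_mul 2
  simp only [Complex.sq_norm, Complex.normSq_sub]
  rw [integral_sub hsum hre, integral_add (hint P) (hint Q), integral_const_mul,
    integral_re_eval_mul_conj_eval hμ]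

namespace ONP

variable {p : ℕ → ℂ[X]} (hp : ONP μ p)
include hp

lemma integral_norm_sq_eq_one (n : ℕ) : ∫ z, ‖(p n).eval z‖ ^ 2 ∂μ = 1 := by
  rw [integral_norm_sq_eq_re_polyInner hμ, hp.polyInner_self, Complex.one_re]

lemma polyInner_eq_zero_of_degree_lt {n : ℕ} {q : ℂ[X]} (hq : q.degree < n) :
    polyInner μ q (p n) = 0 := by
  suffices h : ∀ m ≤ n, ∀ q : ℂ[X], q.degree < m → polyInner μ q (p n) = 0 from
    h n le_rfl q hq
  intro m
  induction m with
  | zero =>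
    intro _ q hq
    simp [show q = 0 by simpa using hq, polyInner]
  | succ m ih =>
    intro hmn q hq
    have hrem := degree_sub_C_mul_lt (Order.le_of_lt_succ hq) (hp.1 m) (hp.ne_zero m)
    rw [← sub_add_cancel q (C _ * p m), polyInner_add_left hμ, ih (by omega) _ hrem,
      polyInner_C_mul_left, hp.polyInner_eq_ite, if_neg (by omega), mul_zero, add_zero]

lemma polyInner_eq_coeff_div_leadingCoeff {n : ℕ} {q : ℂ[X]} (hq : q.degree ≤ n) :
    polyInner μ q (p n) = q.coeff n / (p n).leadingCoeff := by
  have hrem := degree_sub_C_mul_lt hq (hp.1 n) (hp.ne_zero n)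
  calc polyInner μ q (p n)
      = polyInner μ (q - C (q.coeff n / (p n).leadingCoeff) * p n
          + C (q.coeff n / (p n).leadingCoeff) * p n) (p n) := by rw [sub_add_cancel]
    _ = q.coeff n / (p n).leadingCoeff := by
      rw [polyInner_add_left hμ, hp.polyInner_eq_zero_of_degree_lt hμ hrem,
        polyInner_C_mul_left, hp.polyInner_self, mul_one, zero_add]

lemma re_polyInner_eq_div {ν : Measure ℂ} {q : ℕ → ℂ[X]} (hq : ONP ν q) (n : ℕ) :
    (polyInner μ (q n) (p n)).re = (q n).leadingCoeff.re / (p n).leadingCoeff.re := by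
  have hcoeff : (q n).coeff n = (q n).leadingCoeff := by rw [leadingCoeff, hq.1 n]
  rw [hp.polyInner_eq_coeff_div_leadingCoeff hμ (degree_le_of_natDegree_le (hq.1 n).le), hcoeff]
  conv_lhs => rw [hq.leadingCoeff_eq_ofReal, hp.leadingCoeff_eq_ofReal]
  rw [← Complex.ofReal_div, Complex.ofReal_re]

end ONP

end CompactSupport

lemma ONP.integral_norm_sq_add_integral_norm_sq {μ₁ μ₂ : Measure ℂ} [IsFiniteMeasure μ₁]
    [IsFiniteMeasure μ₂] (hμ : IsCompact (msupp (μ₁ + μ₂))) {p : ℕ → ℂ[X]}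
    (hp : ONP (μ₁ + μ₂) p) (n : ℕ) :
    ∫ z, ‖(p n).eval z‖ ^ 2 ∂μ₁ + ∫ z, ‖(p n).eval z‖ ^ 2 ∂μ₂ = 1 := by
  obtain ⟨h₁, h₂⟩ : Integrable (fun z => ‖(p n).eval z‖ ^ 2) μ₁ ∧
      Integrable (fun z => ‖(p n).eval z‖ ^ 2) μ₂ := integrable_add_measure.mp
    (((p n).continuous.norm.pow 2).integrable_of_isCompact_msupp hμ)
  rw [← integral_add_measure h₁ h₂, hp.integral_norm_sq_eq_one hμ]

lemma two_mul_div_one_add_le {β : ℝ} (hβ : -1 < β) : 2 * β / (1 + β) ≤ 2 * β := by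
  rw [div_le_iff₀ (by linarith)]
  nlinarith [sq_nonneg β]

theorem stmt_9_general (μ0 μ1 μ2 : Measure ℂ) [IsFiniteMeasure μ1] [IsFiniteMeasure μ2]
    (hsum : μ0 = μ1 + μ2)
    (h0c : IsCompact (msupp μ0))
    (h1c : IsCompact (msupp μ1))
    (p0 p1 : ℕ → Polynomial ℂ) (hp0 : ONP μ0 p0) (hp1 : ONP μ1 p1)
    (β : ℕ → ℝ)
    (hβ : ∀ n, β n = ((p1 n).leadingCoeff).re / ((p0 n).leadingCoeff).re - 1) :
    ∀ n : ℕ,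
      (∫ z, ‖(p0 n).eval z - (p1 n).eval z‖ ^ 2 ∂μ1)
        = 2 * β n / (1 + β n) - (∫ z, ‖(p0 n).eval z‖ ^ 2 ∂μ2) ∧
      (∫ z, ‖(p0 n).eval z - (p1 n).eval z‖ ^ 2 ∂μ1) ≤ 2 * β n := by
  intro n
  subst hsum
  have ha0 : 0 < (p0 n).leadingCoeff.re := (hp0.2.1 n).1
  have ha1 : 0 < (p1 n).leadingCoeff.re := (hp1.2.1 n).1
  have hβ_gt : -1 < β n := by
    have := div_pos ha1 ha0
    linarith [hβ n]
  have hβ_frac : 2 * β n / (1 + β n)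
      = 2 - 2 * ((p0 n).leadingCoeff.re / (p1 n).leadingCoeff.re) := by
    rw [hβ n]
    field_simp [ha0.ne', ha1.ne']
    ring
  have hdist : ∫ z, ‖(p0 n).eval z - (p1 n).eval z‖ ^ 2 ∂μ1
      = 2 * β n / (1 + β n) - ∫ z, ‖(p0 n).eval z‖ ^ 2 ∂μ2 := by
    rw [integral_norm_eval_sub_sq h1c, hp1.integral_norm_sq_eq_one h1c,
      hp1.re_polyInner_eq_div h1c hp0, hβ_frac]
    linarith [hp0.integral_norm_sq_add_integral_norm_sq h0c n]
  have hμ2 : 0 ≤ ∫ z, ‖(p0 n).eval z‖ ^ 2 ∂μ2 := integral_nonneg fun z => by positivity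
  exact ⟨hdist, by linarith [two_mul_div_one_add_le hβ_gt]⟩

/-- `‖p_n(μ₀,·) − p_n(μ₁,·)‖²_{L²(μ₁)} = 2β_n/(1+β_n) − ‖p_n(μ₀,·)‖²_{L²(μ₂)}`,
and consequently it is at most `2β_n`. -/
theorem stmt_9 (μ0 μ1 μ2 : Measure ℂ) [IsFiniteMeasure μ1] [IsFiniteMeasure μ2]
    (hsum : μ0 = μ1 + μ2) (hle : μ1 ≤ μ0)
    (h0c : IsCompact (msupp μ0)) (h0i : (msupp μ0).Infinite)
    (h1c : IsCompact (msupp μ1)) (h1i : (msupp μ1).Infinite)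
    (p0 p1 : ℕ → Polynomial ℂ) (hp0 : ONP μ0 p0) (hp1 : ONP μ1 p1)
    (β : ℕ → ℝ)
    (hβ : ∀ n, β n = ((p1 n).leadingCoeff).re / ((p0 n).leadingCoeff).re - 1) :
    ∀ n : ℕ,
      (∫ z, ‖(p0 n).eval z - (p1 n).eval z‖ ^ 2 ∂μ1)
        = 2 * β n / (1 + β n) - (∫ z, ‖(p0 n).eval z‖ ^ 2 ∂μ2) ∧
      (∫ z, ‖(p0 n).eval z - (p1 n).eval z‖ ^ 2 ∂μ1) ≤ 2 * β n :=
  stmt_9_general μ0 μ1 μ2 hsum h0c h1c p0 p1 hp0 hp1 β hβ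
end
end

section
/- Let K be a compact subset of 𝔻 with r := max{|z| : z ∈ K} and let μ₁ := A|_{𝔻∖K}, μ₀ := A|_𝔻 be area measures. Then the leading coefficients satisfy 1 ≤ γ_n(μ₁)/γ_n(μ₀) ≤ (1 − r^{2n+2})^{−1/2}; in particular γ_n(μ₁)/√((n+1)/π) = 1 + O(r^{2n}). -/
open MeasureTheory Polynomial Filter

noncomputable section

/-! For every polynomial `q` of degree `≤ n`, `|q_n|² ≤ γ_n(μ)² ∫ |q|² dμ`: in the orthonormal
expansion of `q` the `p_n`-coefficient is `q_n / γ_n`, and Parseval bounds its square by the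
integral. Taking `q = zⁿ` and `𝔻 ∖ K ⊆ 𝔻` gives `1 ≤ γ_n² ∫_𝔻 |z|²ⁿ = γ_n² π/(n+1)`. Conversely,
monomials are orthogonal on the rotation-invariant annulus `r < |z| < 1 ⊆ 𝔻 ∖ K`, so the same
argument there, with `q = p_n`, gives `γ_n² π (1 - r^{2n+2})/(n+1) ≤ ∫_{𝔻∖K} |p_n|² = 1`. -/

open ComplexConjugate Set

lemma ofReal_integral_norm_sq {α : Type*} [MeasurableSpace α] (μ : Measure α) (g : α → ℂ) :
    ((∫ x, ‖g x‖ ^ 2 ∂μ : ℝ) : ℂ) = ∫ x, g x * conj (g x) ∂μ := by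
  simp_rw [Complex.mul_conj', ← Complex.ofReal_pow]
  exact integral_ofReal.symm

lemma integral_norm_sum_sq_of_orthogonal {α ι : Type*} [MeasurableSpace α] {μ : Measure α}
    (s : Finset ι) (f : ι → α → ℂ) (c : ι → ℂ)
    (hint : ∀ i ∈ s, ∀ j ∈ s, Integrable (fun x => f i x * conj (f j x)) μ)
    (horth : ∀ i ∈ s, ∀ j ∈ s, i ≠ j → ∫ x, f i x * conj (f j x) ∂μ = 0) :
    ∫ x, ‖∑ i ∈ s, c i * f i x‖ ^ 2 ∂μ = ∑ i ∈ s, ‖c i‖ ^ 2 * ∫ x, ‖f i x‖ ^ 2 ∂μ := by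
  apply Complex.ofReal_injective
  have hexpand : ∀ x, (∑ i ∈ s, c i * f i x) * conj (∑ j ∈ s, c j * f j x) =
      ∑ i ∈ s, ∑ j ∈ s, c i * conj (c j) * (f i x * conj (f j x)) := by
    intro x
    simp only [map_sum, map_mul, Finset.sum_mul_sum]
    exact Finset.sum_congr rfl fun i _ => Finset.sum_congr rfl fun j _ => by ring
  have hdiag : ∀ i ∈ s, ∑ j ∈ s, c i * conj (c j) * ∫ x, f i x * conj (f j x) ∂μ =
      c i * conj (c i) * ∫ x, f i x * conj (f i x) ∂μ := fun i hi =>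
    Finset.sum_eq_single_of_mem i hi fun j hj hji => by rw [horth i hi j hj hji.symm, mul_zero]
  rw [ofReal_integral_norm_sq, Complex.ofReal_sum]
  simp_rw [hexpand]
  rw [integral_finsetSum _ fun i hi => integrable_finsetSum _ fun j hj =>
    (hint i hi j hj).const_mul _]
  refine Finset.sum_congr rfl fun i hi => ?_
  rw [integral_finsetSum _ fun j hj => (hint i hi j hj).const_mul _]
  simp_rw [integral_const_mul]
  rw [hdiag i hi, Complex.ofReal_mul, ofReal_integral_norm_sq, Complex.mul_conj']
  push_cast
  rfl

lemma integral_preimage_norm_pow_mul_conj_pow_eq_zero (s : Set ℝ) {j k : ℕ} (hjk : j ≠ k) :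
    ∫ z in (‖·‖) ⁻¹' s, (z : ℂ) ^ j * conj z ^ k = 0 := by
  set ω : Circle := Circle.exp (Real.pi / ((j : ℝ) - k))
  -- rotating by `ω` multiplies the integrand by `ω ^ j * conj ω ^ k = -1`
  have hω : (ω : ℂ) ^ j * conj (ω : ℂ) ^ k = -1 := by
    have hd : ((j : ℂ) - k) ≠ 0 := sub_ne_zero.mpr (by exact_mod_cast hjk)
    rw [Circle.coe_exp, ← Complex.exp_conj, ← Complex.exp_nat_mul, ← Complex.exp_nat_mul,
      ← Complex.exp_add, map_mul, Complex.conj_ofReal, Complex.conj_I, ← Complex.exp_pi_mul_I]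
    congr 1
    push_cast
    field_simp
    ring
  have hpre : rotation ω ⁻¹' ((‖·‖) ⁻¹' s) = (‖·‖) ⁻¹' s := by
    ext z; simp [Circle.norm_coe]
  have hrot := (rotation ω).measurePreserving.setIntegral_preimage_emb
    (rotation ω).toHomeomorph.measurableEmbedding (fun z : ℂ => z ^ j * conj z ^ k) ((‖·‖) ⁻¹' s)
  simp only [hpre, rotation_apply, mul_pow, map_mul] at hrot
  simp_rw [mul_mul_mul_comm _ (_ ^ j), hω, neg_one_mul, integral_neg] at hrot
  exact neg_eq_self.mp hrot

lemma integral_preimage_norm_norm_pow {s : Set ℝ} (hs : MeasurableSet s) (m : ℕ) :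
    ∫ z in (‖·‖) ⁻¹' s, ‖(z : ℂ)‖ ^ m = 2 * Real.pi * ∫ y in s ∩ Ioi 0, y ^ (m + 1) := by
  have h := integral_fun_norm_addHaar (volume : Measure ℂ) (s.indicator (· ^ m))
  simp only [Complex.finrank_real_complex, measureReal_def, Complex.volume_ball] at h
  rw [← integral_indicator (measurableSet_preimage measurable_norm hs), inter_comm,
    ← setIntegral_indicator hs]
  convert h using 1
  · rfl
  · simp [indicator, pow_succ', mul_assoc]

lemma integral_preimage_norm_Ioo_norm_pow_sq {a b : ℝ} (ha : 0 ≤ a) (hab : a ≤ b) (n : ℕ) :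
    ∫ z in (‖·‖) ⁻¹' Ioo a b, ‖(z : ℂ) ^ n‖ ^ 2 =
      Real.pi / (n + 1) * (b ^ (2 * n + 2) - a ^ (2 * n + 2)) := by
  simp_rw [norm_pow, ← pow_mul]
  rw [integral_preimage_norm_norm_pow measurableSet_Ioo,
    inter_eq_left.mpr (Ioo_subset_Ioi_self.trans (Ioi_subset_Ioi ha)),
    ← integral_Ioc_eq_integral_Ioo, ← intervalIntegral.integral_of_le hab, integral_pow]
  push_cast
  field_simp
  ring

lemma integral_ball_norm_pow_sq (n : ℕ) :
    ∫ z in Metric.ball (0 : ℂ) 1, ‖z ^ n‖ ^ 2 = Real.pi / (n + 1) := by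
  have hball : Metric.ball (0 : ℂ) 1 = (‖·‖) ⁻¹' Iio 1 := by ext; simp
  have hIoo : Iio (1 : ℝ) ∩ Ioi 0 = Ioo 0 1 ∩ Ioi 0 := by
    rw [inter_comm, Ioi_inter_Iio, inter_eq_left.mpr Ioo_subset_Ioi_self]
  calc ∫ z in Metric.ball (0 : ℂ) 1, ‖z ^ n‖ ^ 2
      = ∫ z in (‖·‖) ⁻¹' Ioo 0 1, ‖(z : ℂ) ^ n‖ ^ 2 := by
        simp_rw [hball, norm_pow, ← pow_mul]
        rw [integral_preimage_norm_norm_pow measurableSet_Iio, hIoo,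
          ← integral_preimage_norm_norm_pow measurableSet_Ioo]
    _ = Real.pi / (n + 1) := by
        rw [integral_preimage_norm_Ioo_norm_pow_sq le_rfl zero_le_one]
        simp

lemma norm_coeff_sq_mul_integral_le {s : Set ℝ} (hs : BddAbove s) {n : ℕ} {q : ℂ[X]}
    (hq : q.natDegree ≤ n) :
    ‖q.coeff n‖ ^ 2 * ∫ z in (‖·‖) ⁻¹' s, ‖(z : ℂ) ^ n‖ ^ 2 ≤ ∫ z in (‖·‖) ⁻¹' s, ‖q.eval z‖ ^ 2 := by
  obtain ⟨R, hR⟩ := hs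
  have hint : ∀ {g : ℂ → ℂ}, Continuous g → IntegrableOn g ((‖·‖) ⁻¹' s) :=
    fun hg => (hg.continuousOn.integrableOn_compact (isCompact_closedBall 0 R)).mono_set
      fun z hz => mem_closedBall_zero_iff.mpr (hR hz)
  have hparseval := integral_norm_sum_sq_of_orthogonal (μ := volume.restrict ((‖·‖) ⁻¹' s))
    (Finset.range (n + 1)) (fun k z => z ^ k) q.coeff
    (fun i _ j _ => hint ((continuous_pow i).mul (continuous_pow j).star))
    (fun i _ j _ hij => by simpa only [map_pow] using
      integral_preimage_norm_pow_mul_conj_pow_eq_zero s hij)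
  simp_rw [← eval_eq_sum_range' (Nat.lt_succ_of_le hq)] at hparseval
  rw [hparseval]
  exact Finset.single_le_sum
    (f := fun k => ‖q.coeff k‖ ^ 2 * ∫ z in (‖·‖) ⁻¹' s, ‖(z : ℂ) ^ k‖ ^ 2)
    (fun k _ => mul_nonneg (sq_nonneg _) (integral_nonneg fun _ => sq_nonneg _))
    (Finset.self_mem_range_succ n)

namespace ONP

variable {μ : Measure ℂ} {p : ℕ → ℂ[X]} {S : Set ℂ}

lemma leadingCoeff_ne_zero (hp : ONP μ p) (n : ℕ) : (p n).leadingCoeff ≠ 0 := fun h => by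
  simpa [h] using (hp.2.1 n).1

lemma integral_norm_eval_sq (hp : ONP μ p) (n : ℕ) : ∫ z, ‖(p n).eval z‖ ^ 2 ∂μ = 1 := by
  apply Complex.ofReal_injective
  rw [ofReal_integral_norm_sq, hp.2.2 n n, if_pos rfl, Complex.ofReal_one]

lemma integrable_eval_mul_conj (hp : ONP μ p) (m n : ℕ) :
    Integrable (fun z => (p m).eval z * conj ((p n).eval z)) μ := by
  -- a Bochner integral that is nonzero certifies integrability
  have hsq : ∀ k, Integrable (fun z => (p k).eval z * conj ((p k).eval z)) μ := fun k =>
    .of_integral_ne_zero (by rw [hp.2.2 k k, if_pos rfl]; exact one_ne_zero)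
  refine ((hsq m).norm.add (hsq n).norm).mono'
    ((p m).continuous.mul ((p n).continuous.star)).aestronglyMeasurable
    (.of_forall fun z => ?_)
  simp only [Pi.add_apply, norm_mul, Complex.norm_conj]
  nlinarith [sq_nonneg (‖(p m).eval z‖ - ‖(p n).eval z‖)]

lemma exists_eq_sum_smul (hp : ONP μ p) {n : ℕ} {q : ℂ[X]} (hq : q.natDegree ≤ n) :
    ∃ c : ℕ → ℂ, ∑ k ∈ Finset.range (n + 1), c k • p k = q := by
  let S : Polynomial.Sequence ℂ :=
    ⟨p, fun k => (degree_eq_iff_natDegree_eq (Polynomial.leadingCoeff_ne_zero.mp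
      (hp.leadingCoeff_ne_zero k))).mpr (hp.1 k)⟩
  have hspan := S.span_degreeLT (m := n + 1) fun k _ => (hp.leadingCoeff_ne_zero k).isUnit
  have hqmem : q ∈ degreeLT ℂ (n + 1) :=
    mem_degreeLT.mpr ((degree_le_of_natDegree_le hq).trans_lt (by exact_mod_cast n.lt_succ_self))
  rwa [← hspan, ← Finset.coe_range, Submodule.mem_span_image_finset_iff_exists_fun'] at hqmem

lemma norm_coeff_sq_le (hp : ONP μ p) {n : ℕ} {q : ℂ[X]} (hq : q.natDegree ≤ n) :
    ‖q.coeff n‖ ^ 2 ≤ ‖(p n).leadingCoeff‖ ^ 2 * ∫ z, ‖q.eval z‖ ^ 2 ∂μ := by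
  obtain ⟨c, rfl⟩ := hp.exists_eq_sum_smul hq
  have hcoeff : (∑ k ∈ Finset.range (n + 1), c k • p k).coeff n = c n * (p n).leadingCoeff := by
    rw [finsetSum_coeff, Finset.sum_eq_single_of_mem n (Finset.self_mem_range_succ n)
      fun k hk hkn => ?_, coeff_smul, smul_eq_mul, leadingCoeff, hp.1]
    have hk' : (p k).natDegree < n := (hp.1 k).symm ▸ (Finset.mem_range_succ_iff.mp hk).lt_of_ne hkn
    rw [coeff_smul, coeff_eq_zero_of_natDegree_lt hk', smul_zero]
  have hparseval : ∫ z, ‖(∑ k ∈ Finset.range (n + 1), c k • p k).eval z‖ ^ 2 ∂μ =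
      ∑ k ∈ Finset.range (n + 1), ‖c k‖ ^ 2 := by
    simp only [eval_finsetSum, eval_smul, smul_eq_mul]
    rw [integral_norm_sum_sq_of_orthogonal _ (fun k z => (p k).eval z) c
      (fun i _ j _ => hp.integrable_eval_mul_conj i j)
      (fun i _ j _ hij => by rw [hp.2.2 i j, if_neg hij])]
    simp_rw [hp.integral_norm_eval_sq, mul_one]
  rw [hcoeff, hparseval, norm_mul, mul_pow, mul_comm]
  gcongr
  exact Finset.single_le_sum (fun k _ => sq_nonneg ‖c k‖) (Finset.self_mem_range_succ n)

lemma div_pi_le_norm_leadingCoeff_sq (hS : S ⊆ Metric.ball 0 1) (hp : ONP (volume.restrict S) p)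
    (n : ℕ) : (n + 1) / Real.pi ≤ ‖(p n).leadingCoeff‖ ^ 2 := by
  have hX := hp.norm_coeff_sq_le (natDegree_X_pow_le (R := ℂ) n)
  simp only [coeff_X_pow_self, norm_one, one_pow, eval_pow, eval_X] at hX
  have hmono : ∫ z in S, ‖z ^ n‖ ^ 2 ≤ Real.pi / (n + 1) := by
    rw [← integral_ball_norm_pow_sq]
    refine setIntegral_mono_set ?_ (.of_forall fun _ => sq_nonneg _) hS.eventuallyLE
    exact ((continuous_pow n).norm.pow 2).continuousOn.integrableOn_compact
      (isCompact_closedBall 0 1) |>.mono_set Metric.ball_subset_closedBall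
  calc (n + 1) / Real.pi
      ≤ (n + 1) / Real.pi * (‖(p n).leadingCoeff‖ ^ 2 * (Real.pi / (n + 1))) := by
        refine le_mul_of_one_le_right (by positivity) (hX.trans ?_)
        gcongr
    _ = ‖(p n).leadingCoeff‖ ^ 2 := by field_simp

lemma norm_leadingCoeff_sq_mul_le {r : ℝ} (hr0 : 0 ≤ r) (hr1 : r ≤ 1)
    (hS : (‖·‖) ⁻¹' Ioo r 1 ⊆ S) (hp : ONP (volume.restrict S) p) (n : ℕ) :
    ‖(p n).leadingCoeff‖ ^ 2 * (1 - r ^ (2 * n + 2)) ≤ (n + 1) / Real.pi := by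
  have hann := norm_coeff_sq_mul_integral_le (q := p n) (s := Ioo r 1) bddAbove_Ioo (hp.1 n).le
  have hlc : (p n).coeff n = (p n).leadingCoeff := by rw [leadingCoeff, hp.1 n]
  rw [integral_preimage_norm_Ioo_norm_pow_sq hr0 hr1, one_pow, hlc] at hann
  have hmono : ∫ z in (‖·‖) ⁻¹' Ioo r 1, ‖(p n).eval z‖ ^ 2 ≤ 1 := by
    refine (setIntegral_mono_set ?_ (.of_forall fun _ => sq_nonneg _) hS.eventuallyLE).trans
      (hp.integral_norm_eval_sq n).le
    exact .of_integral_ne_zero (by rw [hp.integral_norm_eval_sq n]; exact one_ne_zero)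
  calc ‖(p n).leadingCoeff‖ ^ 2 * (1 - r ^ (2 * n + 2))
      = (n + 1) / Real.pi *
          (‖(p n).leadingCoeff‖ ^ 2 * (Real.pi / (n + 1) * (1 - r ^ (2 * n + 2)))) := by
        field_simp
    _ ≤ (n + 1) / Real.pi := mul_le_of_le_one_right (by positivity) (hann.trans hmono)

end ONP

lemma one_le_div_sqrt_of_le_sq {a γ : ℝ} (ha : 0 < a) (hγ : 0 ≤ γ) (h : a ≤ γ ^ 2) :
    1 ≤ γ / √a := by
  rw [one_le_div (Real.sqrt_pos.mpr ha)]
  exact Real.sqrt_le_iff.mpr ⟨hγ, h⟩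

lemma div_sqrt_le_inv_sqrt_one_sub {a γ x : ℝ} (ha : 0 < a) (hx : x < 1)
    (h : γ ^ 2 * (1 - x) ≤ a) : γ / √a ≤ (√(1 - x))⁻¹ := by
  have h1x : 0 < √(1 - x) := Real.sqrt_pos.mpr (by linarith)
  rw [div_le_iff₀ (Real.sqrt_pos.mpr ha), inv_mul_eq_div, le_div_iff₀ h1x]
  calc γ * √(1 - x) ≤ |γ| * √(1 - x) := by gcongr; exact le_abs_self γ
    _ = √(γ ^ 2 * (1 - x)) := by rw [Real.sqrt_mul (sq_nonneg γ), Real.sqrt_sq_eq_abs]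
    _ ≤ √a := Real.sqrt_le_sqrt h

lemma inv_sqrt_one_sub_pow_sub_one_le {r : ℝ} (hr0 : 0 ≤ r) (hr1 : r < 1) (n : ℕ) :
    (√(1 - r ^ (2 * n + 2)))⁻¹ - 1 ≤ (1 - r ^ 2)⁻¹ * r ^ (2 * n) := by
  have hr2 : r ^ 2 < 1 := pow_lt_one₀ hr0 hr1 two_ne_zero
  have hx : r ^ (2 * n + 2) ≤ r ^ 2 := pow_le_pow_of_le_one hr0 hr1.le (by omega)
  have h1x : 0 < 1 - r ^ (2 * n + 2) := by linarith
  have hsqrt : 1 - r ^ (2 * n + 2) ≤ √(1 - r ^ (2 * n + 2)) :=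
    Real.le_sqrt_self_iff.mpr (by linarith [pow_nonneg hr0 (2 * n + 2)])
  calc (√(1 - r ^ (2 * n + 2)))⁻¹ - 1
      ≤ (1 - r ^ (2 * n + 2))⁻¹ - 1 := by gcongr
    _ = r ^ (2 * n) * r ^ 2 / (1 - r ^ (2 * n + 2)) := by
        rw [← pow_add]; field_simp; ring
    _ ≤ r ^ (2 * n) * 1 / (1 - r ^ 2) := by gcongr
    _ = (1 - r ^ 2)⁻¹ * r ^ (2 * n) := by ring

theorem stmt_18_general (K : Set ℂ)
    (hKD : K ⊆ Metric.ball (0 : ℂ) 1)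
    (r : ℝ) (hr : IsGreatest ((fun z : ℂ => ‖z‖) '' K) r)
    (μ1 : Measure ℂ)
    (hμ1 : μ1 = volume.restrict (Metric.ball (0 : ℂ) 1 \ K))
    (p : ℕ → Polynomial ℂ) (hp : ONP μ1 p) :
    (∀ n : ℕ,
      1 ≤ ((p n).leadingCoeff).re / Real.sqrt (((n : ℝ) + 1) / Real.pi) ∧
      ((p n).leadingCoeff).re / Real.sqrt (((n : ℝ) + 1) / Real.pi)
        ≤ (Real.sqrt (1 - r ^ (2 * n + 2)))⁻¹) ∧
    ∃ C : ℝ, 0 < C ∧ ∀ n : ℕ,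
      |((p n).leadingCoeff).re / Real.sqrt (((n : ℝ) + 1) / Real.pi) - 1|
        ≤ C * r ^ (2 * n) := by
  subst hμ1
  obtain ⟨z₀, hz₀, hz₀r⟩ := hr.1
  have hr0 : 0 ≤ r := hz₀r ▸ norm_nonneg z₀
  have hr1 : r < 1 := hz₀r ▸ mem_ball_zero_iff.mp (hKD hz₀)
  have hann : (‖·‖) ⁻¹' Ioo r 1 ⊆ Metric.ball (0 : ℂ) 1 \ K := fun z hz =>
    ⟨mem_ball_zero_iff.mpr hz.2, fun hzK => (hr.2 ⟨z, hzK, rfl⟩).not_gt hz.1⟩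
  have hγ : ∀ n, ‖(p n).leadingCoeff‖ = ((p n).leadingCoeff).re := fun n => by
    rw [← Complex.abs_re_eq_norm.mpr (hp.2.1 n).2, abs_of_pos (hp.2.1 n).1]
  have hbounds : ∀ n : ℕ,
      1 ≤ ((p n).leadingCoeff).re / √((n + 1) / Real.pi) ∧
      ((p n).leadingCoeff).re / √((n + 1) / Real.pi) ≤ (√(1 - r ^ (2 * n + 2)))⁻¹ := fun n => by
    have hlow := hp.div_pi_le_norm_leadingCoeff_sq sdiff_subset n
    have hup := hp.norm_leadingCoeff_sq_mul_le hr0 hr1.le hann n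
    rw [hγ] at hlow hup
    exact ⟨one_le_div_sqrt_of_le_sq (by positivity) (hp.2.1 n).1.le hlow,
      div_sqrt_le_inv_sqrt_one_sub (by positivity) (pow_lt_one₀ hr0 hr1 (by omega)) hup⟩
  refine ⟨hbounds, (1 - r ^ 2)⁻¹, inv_pos.mpr (by nlinarith), fun n => ?_⟩
  rw [abs_of_nonneg (sub_nonneg.mpr (hbounds n).1)]
  linarith [(hbounds n).2, inv_sqrt_one_sub_pow_sub_one_le hr0 hr1 n]

/-- For `μ₁ = A|_{𝔻∖K}` and `μ₀ = A|_𝔻` with `r = max{|z| : z ∈ K}`: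
`1 ≤ γ_n(μ₁)/γ_n(μ₀) ≤ (1 − r^{2n+2})^{−1/2}`, where `γ_n(μ₀) = √((n+1)/π)`;
in particular `γ_n(μ₁)/√((n+1)/π) = 1 + O(r^{2n})`. -/
theorem stmt_18 (K : Set ℂ) (hKc : IsCompact K) (hKne : K.Nonempty)
    (hKD : K ⊆ Metric.ball (0 : ℂ) 1)
    (r : ℝ) (hr : IsGreatest ((fun z : ℂ => ‖z‖) '' K) r)
    (μ0 μ1 : Measure ℂ)
    (hμ0 : μ0 = volume.restrict (Metric.ball (0 : ℂ) 1))
    (hμ1 : μ1 = volume.restrict (Metric.ball (0 : ℂ) 1 \ K))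
    (p : ℕ → Polynomial ℂ) (hp : ONP μ1 p) :
    (∀ n : ℕ,
      1 ≤ ((p n).leadingCoeff).re / Real.sqrt (((n : ℝ) + 1) / Real.pi) ∧
      ((p n).leadingCoeff).re / Real.sqrt (((n : ℝ) + 1) / Real.pi)
        ≤ (Real.sqrt (1 - r ^ (2 * n + 2)))⁻¹) ∧
    ∃ C : ℝ, 0 < C ∧ ∀ n : ℕ,
      |((p n).leadingCoeff).re / Real.sqrt (((n : ℝ) + 1) / Real.pi) - 1|
        ≤ C * r ^ (2 * n) :=
  stmt_18_general K hKD r hr μ1 hμ1 p hp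
end
end
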